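/- arXiv:1604.06870 — 2 statements merged into one kernel-verified Lean document; each statement's English description precedes it below -/
import Mathlib

section
/- For real α and θ, the maximum over γ, γ' of f₁ + f₂, where f₁ = (cos γ cos α + sin α cos θ cos γ' + sin α sin θ sin γ')² and f₂ = (cos γ cos α + sin α cos θ sin γ' + sin α sin θ cos γ')², assuming cos α ≥ 0, sin α ≥ 0, cos θ ≥ 0, sin θ ≥ 0, is attained at γ = 0, γ' = π/4, with maximal value 2·(cos α + sin α·(cos θ + sin θ)/√2)². -/
/-!
Write `u = cos γ cos α`, `p = sin α P` and `q = sin α Q` with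
`P = cos θ cos γ' + sin θ sin γ'`, `Q = cos θ sin γ' + sin θ cos γ'`, so that
`f₁ + f₂ = ‖(u, u) + (p, q)‖²`. By the triangle inequality this is at most
`(√2 |u| + ‖(p, q)‖)²`, and both norms are maximal at `γ = 0`, `γ' = π/4`: `|u| ≤ cos α`, and
`P² + Q² ≤ (cos θ + sin θ)²` because the difference is `2 cos θ sin θ (cos γ' - sin γ')² ≥ 0`.
-/

open Real

lemma mul_add_mul_sq_add_sq_le (c t A B : ℝ) (hct : 0 ≤ c * t) :
    (c * A + t * B) ^ 2 + (c * B + t * A) ^ 2 ≤ (c + t) ^ 2 * (A ^ 2 + B ^ 2) := by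
  nlinarith [mul_nonneg hct (sq_nonneg (A - B))]

/-- The triangle inequality `‖(u, u) + (p, q)‖ ≤ ‖(u, u)‖ + ‖(p, q)‖` in `ℝ²`, squared. -/
lemma add_sq_add_add_sq_le {u p q m r : ℝ} (hu : |u| ≤ m) (hr : 0 ≤ r)
    (hpq : p ^ 2 + q ^ 2 ≤ r ^ 2) :
    (u + p) ^ 2 + (u + q) ^ 2 ≤ (√2 * m + r) ^ 2 := by
  have hs2 : √2 ^ 2 = 2 := sq_sqrt zero_le_two
  have hsum : |p + q| ≤ √2 * r :=
    abs_le_of_sq_le_sq (by nlinarith [sq_nonneg (p - q)]) (by positivity)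
  have hcross : u * (p + q) ≤ m * (√2 * r) := by
    calc u * (p + q) ≤ |u| * |p + q| := (le_abs_self _).trans_eq (abs_mul _ _)
      _ ≤ m * (√2 * r) := mul_le_mul hu hsum (abs_nonneg _) ((abs_nonneg u).trans hu)
  have hu2 : u ^ 2 ≤ m ^ 2 := sq_le_sq.mpr (hu.trans (le_abs_self m))
  nlinarith

lemma two_mul_add_div_sqrt_two_sq (x y : ℝ) :
    2 * (x + y / √2) ^ 2 = (√2 * x + y) ^ 2 :=
  calc 2 * (x + y / √2) ^ 2 = (√2 * (x + y / √2)) ^ 2 := by rw [mul_pow, sq_sqrt zero_le_two]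
    _ = (√2 * x + y) ^ 2 := by rw [mul_add, mul_div_cancel₀ y (sqrt_ne_zero'.2 two_pos)]

/-- The optimization in Lemma 1 (Appendix A): with nonnegative `cos α, sin α, cos θ, sin θ`,
the maximum of `f₁ + f₂` over `γ, γ'` is attained at `γ = 0`, `γ' = π/4`, with maximal
value `2(cos α + sin α (cos θ + sin θ)/√2)²`. -/
theorem fef_optimization_lemma (α θ : ℝ)
    (hca : 0 ≤ Real.cos α) (hsa : 0 ≤ Real.sin α)
    (hct : 0 ≤ Real.cos θ) (hst : 0 ≤ Real.sin θ) :
    (∀ γ γ' : ℝ,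
      (Real.cos γ * Real.cos α + Real.sin α * Real.cos θ * Real.cos γ' +
          Real.sin α * Real.sin θ * Real.sin γ')^2 +
        (Real.cos γ * Real.cos α + Real.sin α * Real.cos θ * Real.sin γ' +
          Real.sin α * Real.sin θ * Real.cos γ')^2 ≤
      2 * (Real.cos α + Real.sin α * (Real.cos θ + Real.sin θ) / Real.sqrt 2)^2) ∧
    (Real.cos 0 * Real.cos α + Real.sin α * Real.cos θ * Real.cos (Real.pi / 4) +
        Real.sin α * Real.sin θ * Real.sin (Real.pi / 4))^2 +
      (Real.cos 0 * Real.cos α + Real.sin α * Real.cos θ * Real.sin (Real.pi / 4) +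
        Real.sin α * Real.sin θ * Real.cos (Real.pi / 4))^2 =
      2 * (Real.cos α + Real.sin α * (Real.cos θ + Real.sin θ) / Real.sqrt 2)^2 := by
  refine ⟨fun γ γ' => ?_, ?_⟩
  · have hu : |cos γ * cos α| ≤ cos α := by
      rw [abs_mul, abs_of_nonneg hca]
      exact mul_le_of_le_one_left hca (abs_cos_le_one γ)
    have hpq : (cos θ * cos γ' + sin θ * sin γ') ^ 2 + (cos θ * sin γ' + sin θ * cos γ') ^ 2 ≤
        (cos θ + sin θ) ^ 2 := by
      simpa only [cos_sq_add_sin_sq, mul_one] using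
        mul_add_mul_sq_add_sq_le (cos θ) (sin θ) (cos γ') (sin γ') (mul_nonneg hct hst)
    have hspq : (sin α * (cos θ * cos γ' + sin θ * sin γ')) ^ 2 +
        (sin α * (cos θ * sin γ' + sin θ * cos γ')) ^ 2 ≤ (sin α * (cos θ + sin θ)) ^ 2 := by
      simp only [mul_pow, ← mul_add]
      exact mul_le_mul_of_nonneg_left hpq (sq_nonneg _)
    rw [two_mul_add_div_sqrt_two_sq]
    convert add_sq_add_add_sq_le hu (by positivity) hspq using 2 <;> ring
  · rw [cos_zero, cos_pi_div_four, sin_pi_div_four, sqrt_div_self']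
    ring
end

section
/- For integer d ≥ 2, define D(x) = -((1+x)/2)·log₂((1+x)/(d²+d)) - ((1-x)/2)·log₂((1-x)/(d²-d)) - log₂ d for x ∈ [0,1). Then D is maximized on [0,1) at x = 1/d, where D(1/d) = log₂ d. -/
/-- On `[0,1)` (where the Werner state is separable and its entanglement of formation
vanishes), the quantum discord
`D(x) = -((1+x)/2) log₂((1+x)/(d²+d)) - ((1-x)/2) log₂((1-x)/(d²-d)) - log₂ d`
of the complement to the d⊗d Werner state is maximized at `x = 1/d`,
where it equals `log₂ d`. -/
theorem discord_max_on_separable_region (d : ℕ) (hd : 2 ≤ d) :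
    (∀ x ∈ Set.Ico (0 : ℝ) 1,
      -((1 + x) / 2) * Real.logb 2 ((1 + x) / ((d : ℝ)^2 + d))
          - ((1 - x) / 2) * Real.logb 2 ((1 - x) / ((d : ℝ)^2 - d)) - Real.logb 2 d ≤
        Real.logb 2 d) ∧
    -((1 + 1 / (d : ℝ)) / 2) * Real.logb 2 ((1 + 1 / (d : ℝ)) / ((d : ℝ)^2 + d))
        - ((1 - 1 / (d : ℝ)) / 2) * Real.logb 2 ((1 - 1 / (d : ℝ)) / ((d : ℝ)^2 - d))
        - Real.logb 2 d = Real.logb 2 d := by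
  have hc : (2:ℝ) ≤ (d:ℝ) := by exact_mod_cast hd
  set c : ℝ := (d:ℝ) with hcdef
  have hc0 : (0:ℝ) < c := by linarith
  have hcne : c ≠ 0 := ne_of_gt hc0
  have hc1 : (0:ℝ) < c - 1 := by linarith
  have hc1' : (0:ℝ) < c + 1 := by linarith
  have hc1ne : c - 1 ≠ 0 := ne_of_gt hc1
  have hc1ne' : c + 1 ≠ 0 := ne_of_gt hc1'
  have hl2 : (0:ℝ) < Real.log 2 := Real.log_pos (by norm_num)
  have hq1 : c^2 + c ≠ 0 := by positivity
  have hq2 : c^2 - c ≠ 0 := by nlinarith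
  constructor
  · intro x hx
    obtain ⟨hx0, hx1⟩ := hx
    have h1x : (0:ℝ) < 1 + x := by linarith
    have h1x' : (0:ℝ) < 1 - x := by linarith
    set t1 : ℝ := (1 + x) * c / (c + 1) with ht1def
    set t2 : ℝ := (1 - x) * c / (c - 1) with ht2def
    have ht1 : 0 < t1 := by positivity
    have ht2 : 0 < t2 := by positivity
    have hu : (1 + x) / (c^2 + c) = t1 / c^2 := by
      rw [ht1def]; field_simp
    have hv : (1 - x) / (c^2 - c) = t2 / c^2 := by
      rw [ht2def]; field_simp
    have hlu : Real.logb 2 ((1 + x) / (c^2 + c))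
        = Real.logb 2 t1 - 2 * Real.logb 2 c := by
      rw [hu, Real.logb_div ht1.ne' (by positivity), Real.logb_pow]
      norm_num
    have hlv : Real.logb 2 ((1 - x) / (c^2 - c))
        = Real.logb 2 t2 - 2 * Real.logb 2 c := by
      rw [hv, Real.logb_div ht2.ne' (by positivity), Real.logb_pow]
      norm_num
    -- key pointwise bound: -log t ≤ 1/t - 1
    have key : ∀ t : ℝ, 0 < t → -Real.log t ≤ 1/t - 1 := by
      intro t ht
      have h := Real.log_le_sub_one_of_pos (show (0:ℝ) < t⁻¹ by positivity)
      rw [Real.log_inv] at h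
      rw [one_div]
      linarith
    have e1 := key t1 ht1
    have e2 := key t2 ht2
    have hA : (0:ℝ) ≤ (1 + x)/2 := by linarith
    have hB : (0:ℝ) ≤ (1 - x)/2 := by linarith
    have hsum : (1 + x)/2 * (1/t1 - 1) + (1 - x)/2 * (1/t2 - 1) = 0 := by
      rw [ht1def, ht2def]; field_simp; ring
    have hnum : (1 + x)/2 * (-Real.log t1) + (1 - x)/2 * (-Real.log t2) ≤ 0 := by
      have m1 := mul_le_mul_of_nonneg_left e1 hA
      have m2 := mul_le_mul_of_nonneg_left e2 hB
      linarith
    have hmain : -((1 + x)/2) * Real.logb 2 t1 - ((1 - x)/2) * Real.logb 2 t2 ≤ 0 := by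
      simp only [Real.logb]
      have heq : -((1 + x)/2) * (Real.log t1 / Real.log 2)
          - ((1 - x)/2) * (Real.log t2 / Real.log 2)
          = ((1 + x)/2 * (-Real.log t1) + (1 - x)/2 * (-Real.log t2)) / Real.log 2 := by
        ring
      rw [heq]
      exact div_nonpos_of_nonpos_of_nonneg hnum hl2.le
    rw [hlu, hlv]
    nlinarith [hmain]
  · have h1 : (1 + 1/c) / (c^2 + c) = 1 / c^2 := by field_simp
    have h2 : (1 - 1/c) / (c^2 - c) = 1 / c^2 := by field_simp
    have h3 : Real.logb 2 (1 / c^2) = -(2 * Real.logb 2 c) := by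
      rw [one_div, Real.logb_inv, Real.logb_pow]
      norm_num
    rw [h1, h2, h3]
    ring
end
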